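/- arXiv:1410.7417 — 3 statements merged into one kernel-verified Lean document; each statement's English description precedes it below -/
import Mathlib

section
/- Let k be a field, R a finitely generated commutative k-algebra, φ₁, …, φₙ ∈ R, and δ ∈ R such that the image of δ in R/(φ₂, …, φₙ) is nilpotent. Assume that R/(φ₁, …, φₙ) is a finite-dimensional k-vector space. Then the quotient R[t]/(φ₁ + δ·t, φ₂, …, φₙ) of the polynomial ring R[t] by the ideal generated by φ₁ + δ·t and (the images of) φ₂, …, φₙ is a finitely generated module over the polynomial ring k[t]. -/
/-!
Write `S = R[t]/J` and `a` for the image of `φ₁` in `S`. Modulo `J` we have `φ₁ = -δt`, and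
`δ` is nilpotent in `S` because it is nilpotent modulo `(φ₂, …, φₙ) ⊆ J`; hence `a` is
nilpotent. The quotient `S/(a)` is a quotient of `(R/(φ₁, …, φₙ))[t]`, so it is spanned over
`k[t]` by a `k`-basis of `R/(φ₁, …, φₙ)`. Finiteness over `k[t]` lifts from `S/(a)` to `S`
along the finitely generated nilpotent ideal `(a)`.
-/

open Polynomial

theorem Ideal.Quotient.isNilpotent_mk_of_add_mul_mem {S : Type*} [CommRing S] {J : Ideal S}
    {a d x : S} (hd : IsNilpotent (Ideal.Quotient.mk J d)) (h : a + d * x ∈ J) :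
    IsNilpotent (Ideal.Quotient.mk J a) := by
  have : Ideal.Quotient.mk J a = -(Ideal.Quotient.mk J d * Ideal.Quotient.mk J x) :=
    eq_neg_of_add_eq_zero_left (by rwa [← map_mul, ← map_add, Ideal.Quotient.eq_zero_iff_mem])
  rw [this]
  exact ((Commute.all _ _).isNilpotent_mul_right hd).neg

theorem Module.finite_of_isNilpotent_of_finite_quotient {R S : Type*} [CommRing R] [CommRing S]
    [Algebra R S] {a : S} (ha : IsNilpotent a) [Module.Finite R (S ⧸ Ideal.span {a})] :
    Module.Finite R S := by
  refine Module.finite_of_surjective_of_ker_le_nilradical (T := S ⧸ Ideal.span {a})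
    (Ideal.Quotient.mkₐ R (Ideal.span {a})) (Ideal.Quotient.mkₐ_surjective _ _) ?_ ?_
  · rw [AlgHom.ker_coe, Ideal.Quotient.mkₐ_ker, Ideal.span_le, Set.singleton_subset_iff]
    exact ha
  · rw [AlgHom.ker_coe, Ideal.Quotient.mkₐ_ker]
    exact Submodule.fg_span_singleton a

namespace Polynomial

variable {k A B : Type*} [CommRing k] [CommRing A] [Algebra k A] [CommRing B] [Algebra k[X] B]

theorem apply_mem_span_image_of_span_eq_top (g : A →+* B)
    (hg : ∀ c : k, g (algebraMap k A c) = algebraMap k[X] B (C c)) {s : Set A}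
    (hs : Submodule.span k s = ⊤) (x : A) : g x ∈ Submodule.span k[X] (g '' s) := by
  have hx : x ∈ Submodule.span k s := hs ▸ Submodule.mem_top
  induction hx using Submodule.span_induction with
  | mem x hx => exact Submodule.subset_span ⟨x, hx, rfl⟩
  | zero => simp
  | add x y _ _ hx hy => rw [map_add]; exact add_mem hx hy
  | smul c x _ hx =>
    rw [Algebra.smul_def, map_mul, hg, ← Algebra.smul_def]
    exact Submodule.smul_mem _ _ hx

theorem module_finite_of_surjective (ψ : A[X] →+* B) (hsurj : Function.Surjective ψ)
    (hψ : ∀ p : k[X], ψ (p.map (algebraMap k A)) = algebraMap k[X] B p)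
    (I : Ideal A) [Module.Finite k (A ⧸ I)] (hI : ∀ r ∈ I, ψ (C r) = 0) :
    Module.Finite k[X] B := by
  set g := Ideal.Quotient.lift I (ψ.comp C) hI
  have hg : ∀ c : k, g (algebraMap k (A ⧸ I) c) = algebraMap k[X] B (C c) := fun c => by
    rw [← hψ, map_C]; rfl
  obtain ⟨s, hs⟩ := Module.Finite.fg_top (R := k) (M := A ⧸ I)
  refine ⟨Submodule.fg_def.mpr
    ⟨_, s.finite_toSet.image g, Submodule.eq_top_iff'.mpr fun y => ?_⟩⟩
  obtain ⟨p, rfl⟩ := hsurj y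
  induction p using Polynomial.induction_on' with
  | add p q hp hq => rw [map_add]; exact add_mem hp hq
  | monomial j r =>
    rw [← C_mul_X_pow_eq_monomial, map_mul, mul_comm, ← map_X (algebraMap k A),
      ← Polynomial.map_pow, hψ, ← Algebra.smul_def]
    exact Submodule.smul_mem _ _
      (apply_mem_span_image_of_span_eq_top g hg hs (Ideal.Quotient.mk I r))

end Polynomial

theorem stmt2_general {k : Type*} [Field k] {R : Type*} [CommRing R] [Algebra k R]
    (n : ℕ) (φ : Fin (n + 1) → R) (δ : R)
    (hδ : IsNilpotent
      (Ideal.Quotient.mk (Ideal.span (Set.range fun i : Fin n => φ i.succ)) δ))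
    (hfin : FiniteDimensional k (R ⧸ Ideal.span (Set.range φ)))
    (J : Ideal (Polynomial R))
    (hJ : J = Ideal.span ({Polynomial.C (φ 0) + Polynomial.C δ * Polynomial.X} ∪
        Set.range fun i : Fin n => Polynomial.C (φ i.succ))) :
    letI : Algebra (Polynomial k) (Polynomial R ⧸ J) :=
      ((Ideal.Quotient.mk J).comp (Polynomial.mapRingHom (algebraMap k R))).toAlgebra
    Module.Finite (Polynomial k) (Polynomial R ⧸ J) := by
  let _ : Algebra k[X] (R[X] ⧸ J) :=
    ((Ideal.Quotient.mk J).comp (mapRingHom (algebraMap k R))).toAlgebra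
  have hφ₀ : C (φ 0) + C δ * X ∈ J := by rw [hJ]; exact Ideal.subset_span (Or.inl rfl)
  have hφsucc : Ideal.span (Set.range fun i : Fin n => φ i.succ) ≤ J.comap C :=
    Ideal.span_le.mpr <| Set.range_subset_iff.mpr fun i => by
      rw [SetLike.mem_coe, Ideal.mem_comap, hJ]; exact Ideal.subset_span (Or.inr ⟨i, rfl⟩)
  set a := Ideal.Quotient.mk J (C (φ 0))
  have hCδ : IsNilpotent (Ideal.Quotient.mk J (C δ)) := by
    simpa only [Ideal.quotientMap_mk] using hδ.map (Ideal.quotientMap J C hφsucc)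
  have ha : IsNilpotent a := Ideal.Quotient.isNilpotent_mk_of_add_mul_mem hCδ hφ₀
  let ψ : R[X] →+* (R[X] ⧸ J) ⧸ Ideal.span {a} :=
    (Ideal.Quotient.mk _).comp (Ideal.Quotient.mk J)
  have hker : Ideal.span (Set.range φ) ≤ RingHom.ker (ψ.comp C) := by
    refine Ideal.span_le.mpr <| Set.range_subset_iff.mpr <| Fin.cases ?_ fun i => ?_
    · exact Ideal.Quotient.eq_zero_iff_mem.mpr (Ideal.mem_span_singleton_self a)
    · have : C (φ i.succ) ∈ J := hφsucc (Ideal.subset_span ⟨i, rfl⟩)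
      simp [ψ, Ideal.Quotient.eq_zero_iff_mem.mpr this]
  have _ : Module.Finite k[X] ((R[X] ⧸ J) ⧸ Ideal.span {a}) :=
    module_finite_of_surjective (k := k) (B := (R[X] ⧸ J) ⧸ Ideal.span {a}) ψ
      (Ideal.Quotient.mk_surjective.comp Ideal.Quotient.mk_surjective) (fun _ => rfl)
      (Ideal.span (Set.range φ)) fun _ hr => hker hr
  exact Module.finite_of_isNilpotent_of_finite_quotient ha

/-- Finiteness-of-support claim of Lemma 2.4 ('nilpotent'): if `δ` is nilpotent modulo
`(φ₂, …, φₙ)` and `R/(φ₁, …, φₙ)` is finite-dimensional over `k`, then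
`R[t]/(φ₁ + δ·t, φ₂, …, φₙ)` is a finitely generated `k[t]`-module. -/
theorem stmt2 {k : Type*} [Field k] {R : Type*} [CommRing R] [Algebra k R]
    [Algebra.FiniteType k R]
    (n : ℕ) (φ : Fin (n + 1) → R) (δ : R)
    (hδ : IsNilpotent
      (Ideal.Quotient.mk (Ideal.span (Set.range fun i : Fin n => φ i.succ)) δ))
    (hfin : FiniteDimensional k (R ⧸ Ideal.span (Set.range φ)))
    (J : Ideal (Polynomial R))
    (hJ : J = Ideal.span ({Polynomial.C (φ 0) + Polynomial.C δ * Polynomial.X} ∪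
        Set.range fun i : Fin n => Polynomial.C (φ i.succ))) :
    letI : Algebra (Polynomial k) (Polynomial R ⧸ J) :=
      ((Ideal.Quotient.mk J).comp (Polynomial.mapRingHom (algebraMap k R))).toAlgebra
    Module.Finite (Polynomial k) (Polynomial R ⧸ J) :=
  stmt2_general n φ δ hδ hfin J hJ
end

section
/- Let k be a field of characteristic zero, N ≥ 1, K a field extension of k, and x₁, …, x_N ∈ K elements algebraic over k with minimal polynomials p₁, …, p_N ∈ k[T]. Let J be a finite index set, and for each j ∈ J let L_j be a field extension of k together with elements y_{j,1}, …, y_{j,N} ∈ L_j such that p_i(y_{j,i}) ≠ 0 for at least one index i (evaluation via the algebra map k → L_j). Then there exist λ₁, …, λ_N ∈ k such that the polynomial F(t₁, …, t_N) = Σ_{i=1}^N λ_i·p_i(t_i) satisfies F(x₁, …, x_N) = 0 in K and F(y_{j,1}, …, y_{j,N}) ≠ 0 in L_j for every j ∈ J. -/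
/-! For each `j`, `λ ↦ Σ λᵢ pᵢ(y_{j,i})` is a nonzero `k`-linear map `kᴺ → L_j`, and every `λ`
gives `Σ λᵢ pᵢ(xᵢ) = 0`. Over an infinite field a vector space is not a finite union of proper
subspaces, so some `λ` lies outside all the kernels. -/

theorem LinearMap.exists_forall_apply_ne_zero {k V ι : Type*} [DivisionRing k] [Infinite k]
    [AddCommGroup V] [Module k V] [Finite ι] {W : ι → Type*} [∀ i, AddCommGroup (W i)]
    [∀ i, Module k (W i)] (f : ∀ i, V →ₗ[k] W i) (hf : ∀ i, f i ≠ 0) :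
    ∃ v, ∀ i, f i v ≠ 0 := by
  have hcover : ⋃ i, (LinearMap.ker (f i) : Set V) ≠ Set.univ := fun h ↦ by
    obtain ⟨i, hi⟩ := Subspace.exists_eq_top_of_iUnion_eq_univ h
    exact hf i (LinearMap.ker_eq_top.mp hi)
  obtain ⟨v, hv⟩ := (Set.ne_univ_iff_exists_notMem _).mp hcover
  exact ⟨v, fun i hi ↦ hv (Set.mem_iUnion.mpr ⟨i, hi⟩)⟩

theorem Fintype.linearCombination_ne_zero {R M α : Type*} [Fintype α] [Semiring R]
    [AddCommMonoid M] [Module R M] {v : α → M} (hv : ∃ i, v i ≠ 0) :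
    Fintype.linearCombination R v ≠ 0 := by
  classical
  obtain ⟨i, hi⟩ := hv
  intro h
  exact hi (by simpa using LinearMap.congr_fun h (Pi.single i 1))

theorem stmt6_general {k : Type*} [Field k] [CharZero k] (N : ℕ)
    {K : Type*} [Field K] [Algebra k K] (x : Fin N → K)
    {J : Type*} [Finite J]
    (L : J → Type*) [∀ j, Field (L j)] [∀ j, Algebra k (L j)]
    (y : ∀ j, Fin N → L j)
    (hy : ∀ j, ∃ i, Polynomial.aeval (y j i) (minpoly k (x i)) ≠ 0) :
    ∃ lam : Fin N → k,
      (∑ i, lam i • Polynomial.aeval (x i) (minpoly k (x i)) = 0) ∧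
      ∀ j, ∑ i, lam i • Polynomial.aeval (y j i) (minpoly k (x i)) ≠ 0 := by
  obtain ⟨lam, hlam⟩ := LinearMap.exists_forall_apply_ne_zero
    (fun j ↦ Fintype.linearCombination k fun i ↦ Polynomial.aeval (y j i) (minpoly k (x i)))
    (fun j ↦ Fintype.linearCombination_ne_zero (hy j))
  exact ⟨lam, by simp only [minpoly.aeval, smul_zero, Finset.sum_const_zero], hlam⟩

/-- Explicit content of the proof of Lemma 4.1 ('hsurface'): over a field `k` of
characteristic zero, given algebraic elements `x₁, …, x_N` of an extension `K` with minimal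
polynomials `p₁, …, p_N`, and finitely many points `y_j` of extensions `L_j` at which some
`p_i` does not vanish, there are `λ₁, …, λ_N ∈ k` such that `F = Σ λ_i p_i(t_i)` vanishes at
`x` but at no `y_j`. -/
theorem stmt6 {k : Type*} [Field k] [CharZero k] (N : ℕ) (hN : 1 ≤ N)
    {K : Type*} [Field K] [Algebra k K] (x : Fin N → K)
    (hx : ∀ i, IsAlgebraic k (x i))
    {J : Type*} [Finite J]
    (L : J → Type*) [∀ j, Field (L j)] [∀ j, Algebra k (L j)]
    (y : ∀ j, Fin N → L j)
    (hy : ∀ j, ∃ i, Polynomial.aeval (y j i) (minpoly k (x i)) ≠ 0) :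
    ∃ lam : Fin N → k,
      (∑ i, lam i • Polynomial.aeval (x i) (minpoly k (x i)) = 0) ∧
      ∀ j, ∑ i, lam i • Polynomial.aeval (y j i) (minpoly k (x i)) ≠ 0 :=
  stmt6_general N x L y hy
end

section
/- Let k be a field, R a finitely generated commutative k-algebra, 𝔪 a maximal ideal of R, and α : k[x₁, …, xₙ] → R a k-algebra homomorphism such that the composite k[x₁, …, xₙ] → R → R/𝔪 is surjective. Then there exist an integer m ≥ 0 and elements ρ₁, …, ρ_m ∈ 𝔪 such that R is generated as a k-algebra by α(x₁), …, α(xₙ) together with ρ₁, …, ρ_m. -/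
/-!
Pick generators `y₁, …, y_m` of `R`. Since `k[x₁, …, xₙ] → R/𝔪` is onto, each `yⱼ` agrees with some
`α(pⱼ)` modulo `𝔪`, so `ρⱼ := yⱼ - α(pⱼ)` lies in `𝔪`, and `yⱼ = α(pⱼ) + ρⱼ` lies in the algebra
generated by the `α(xᵢ)` and the `ρⱼ`.
-/

open Set

namespace MvPolynomial

theorem range_eq_adjoin_range_comp_X {k R σ : Type*} [CommSemiring k] [CommSemiring R]
    [Algebra k R] (φ : MvPolynomial σ k →ₐ[k] R) :
    φ.range = Algebra.adjoin k (range (φ ∘ X)) := by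
  conv_lhs => rw [aeval_unique φ]
  exact aeval_range _

end MvPolynomial

theorem Algebra.FiniteType.exists_fin_adjoin_range_eq_top (k R : Type*) [CommSemiring k]
    [CommSemiring R] [Algebra k R] [Algebra.FiniteType k R] :
    ∃ (m : ℕ) (y : Fin m → R), Algebra.adjoin k (range y) = ⊤ := by
  obtain ⟨m, f, hf⟩ := Algebra.FiniteType.iff_quotient_mvPolynomial''.mp ‹_›
  exact ⟨m, f ∘ MvPolynomial.X, by
    rw [← MvPolynomial.range_eq_adjoin_range_comp_X, (AlgHom.range_eq_top f).mpr hf]⟩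

theorem Algebra.adjoin_union_range_sub_eq_top {k R ι : Type*} [CommSemiring k] [Ring R]
    [Algebra k R] {y : ι → R} (hy : Algebra.adjoin k (range y) = ⊤) {t : Set R} {g : ι → R}
    (hg : ∀ i, g i ∈ Algebra.adjoin k t) :
    Algebra.adjoin k (t ∪ range fun i => y i - g i) = ⊤ := by
  rw [_root_.eq_top_iff, ← hy, Algebra.adjoin_le_iff]
  rintro _ ⟨i, rfl⟩
  rw [← add_sub_cancel (g i) (y i)]
  exact add_mem (Algebra.adjoin_mono subset_union_left (hg i))
    (Algebra.subset_adjoin (Or.inr ⟨i, rfl⟩))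

theorem AlgHom.exists_sub_mem_of_surjective_quotient_comp {k A R : Type*} [CommSemiring k]
    [Semiring A] [CommRing R] [Algebra k A] [Algebra k R] {f : A →ₐ[k] R} {I : Ideal R}
    (hf : Function.Surjective ((Ideal.Quotient.mkₐ k I).comp f)) (y : R) :
    ∃ a, y - f a ∈ I := by
  obtain ⟨a, ha⟩ := hf (Ideal.Quotient.mk I y)
  exact ⟨a, (Ideal.Quotient.mk_eq_mk_iff_sub_mem _ _).mp ha.symm⟩

theorem stmt7_general {k : Type*} [Field k] {R : Type*} [CommRing R] [Algebra k R]
    [Algebra.FiniteType k R] (n : ℕ)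
    (𝔪 : Ideal R)
    (α : MvPolynomial (Fin n) k →ₐ[k] R)
    (hsurj : Function.Surjective ((Ideal.Quotient.mkₐ k 𝔪).comp α)) :
    ∃ (m : ℕ) (ρ : Fin m → R), (∀ i, ρ i ∈ 𝔪) ∧
      Algebra.adjoin k
        ((Set.range fun i => α (MvPolynomial.X i)) ∪ Set.range ρ) = ⊤ := by
  obtain ⟨m, y, hy⟩ := Algebra.FiniteType.exists_fin_adjoin_range_eq_top k R
  choose p hp using fun j => AlgHom.exists_sub_mem_of_surjective_quotient_comp hsurj (y j)
  refine ⟨m, fun j => y j - α (p j), hp, Algebra.adjoin_union_range_sub_eq_top hy fun j => ?_⟩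
  rw [← Function.comp_def, ← MvPolynomial.range_eq_adjoin_range_comp_X]
  exact AlgHom.mem_range_self α (p j)

/-- Algebraic form of part (1) of Lemma 4.5 ('psideformation'): if `R` is a finitely
generated `k`-algebra, `𝔪` a maximal ideal, and `α : k[x₁,…,xₙ] → R` a `k`-algebra map whose
composite with `R → R/𝔪` is surjective, then there are finitely many elements
`ρ₁, …, ρ_m ∈ 𝔪` such that `R` is generated as a `k`-algebra by the `α(xᵢ)` and the `ρⱼ`. -/
theorem stmt7 {k : Type*} [Field k] {R : Type*} [CommRing R] [Algebra k R]
    [Algebra.FiniteType k R] (n : ℕ)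
    (𝔪 : Ideal R) [𝔪.IsMaximal]
    (α : MvPolynomial (Fin n) k →ₐ[k] R)
    (hsurj : Function.Surjective ((Ideal.Quotient.mkₐ k 𝔪).comp α)) :
    ∃ (m : ℕ) (ρ : Fin m → R), (∀ i, ρ i ∈ 𝔪) ∧
      Algebra.adjoin k
        ((Set.range fun i => α (MvPolynomial.X i)) ∪ Set.range ρ) = ⊤ :=
  stmt7_general n 𝔪 α hsurj
end
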